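/- Combining the DKW-type bound with the set inclusion argument: if Z¹,…,Zᴺ are i.i.d. copies of a random variable Z with continuous CDF F_Z, F̂(α) := (1/N)∑ᵢ 𝟙(Zⁱ ≤ α) is the empirical CDF, and δ ∈ (0,1), then with probability at least 1 − δ, inf{α | F̂(α) + √(ln(2/δ)/(2N)) ≥ β} ≤ VaR_β(Z) ≤ inf{α | F̂(α) − √(ln(2/δ)/(2N)) ≥ β}, where VaR_β(Z) = inf{α | F_Z(α) ≥ β}. -/

import Mathlib

open MeasureTheory ProbabilityTheory Set

/-!
Off the DKW event `{ω | ∃ α, ε < |F̂ ω α - F α|}`, whose probability is at most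
`2 exp(-2Nε²) = δ` for `ε = √(ln(2/δ)/(2N))`, the level sets are nested:
`{F̂ - ε ≥ β} ⊆ {F ≥ β} ⊆ {F̂ + ε ≥ β}`, and infima reverse inclusions.
-/

lemma coe_csInf_mem_Icc_sInf_image_toEReal {A S B : Set ℝ} (hBS : B ⊆ S) (hSA : S ⊆ A)
    (hS : S.Nonempty) (hS' : BddBelow S) :
    ((sInf S : ℝ) : EReal) ∈ Icc (sInf (Real.toEReal '' A)) (sInf (Real.toEReal '' B)) := by
  rw [Monotone.map_csInf_of_continuousAt continuous_coe_real_ereal.continuousAt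
    (fun _ _ h => EReal.coe_le_coe_iff.mpr h) hS hS']
  exact ⟨sInf_le_sInf (image_mono hSA), sInf_le_sInf (image_mono hBS)⟩

lemma cdf_map_eq_toReal_measure_le {Ω : Type*} [MeasurableSpace Ω] (P : Measure Ω)
    [IsProbabilityMeasure P] {Z : Ω → ℝ} (hZ : Measurable Z) (α : ℝ) :
    cdf (P.map Z) α = (P {ω | Z ω ≤ α}).toReal := by
  have := Measure.isProbabilityMeasure_map (μ := P) hZ.aemeasurable
  rw [cdf_eq_real, measureReal_def, Measure.map_apply hZ measurableSet_Iic]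
  rfl

section LevelSets

variable (μ : Measure ℝ) {β : ℝ}

lemma nonempty_setOf_le_cdf (hβ : β < 1) : {α | β ≤ cdf μ α}.Nonempty :=
  ((tendsto_cdf_atTop μ).eventually_const_le hβ).exists

lemma bddBelow_setOf_le_cdf (hβ : 0 < β) : BddBelow {α | β ≤ cdf μ α} := by
  obtain ⟨α₀, hα₀⟩ := ((tendsto_cdf_atBot μ).eventually_lt_const hβ).exists
  refine ⟨α₀, fun a ha => le_of_not_gt fun hlt => ?_⟩
  exact (ha.trans ((cdf μ).mono hlt.le)).not_gt hα₀

end LevelSets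

lemma two_mul_exp_neg_two_mul_sqrt_log_sq {N δ : ℝ} (hN : 0 < N) (hδ : 0 < δ)
    (hδ2 : δ ≤ 2) :
    2 * Real.exp (-2 * N * Real.sqrt (Real.log (2 / δ) / (2 * N)) ^ 2) = δ := by
  have hlog : 0 ≤ Real.log (2 / δ) := Real.log_nonneg ((le_div_iff₀ hδ).mpr (by linarith))
  rw [Real.sq_sqrt (by positivity)]
  have : -2 * N * (Real.log (2 / δ) / (2 * N)) = -Real.log (2 / δ) := by field_simp
  rw [this, Real.exp_neg, Real.exp_log (by positivity)]
  field_simp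

lemma ofReal_one_sub_le_measure_compl {Ω : Type*} [MeasurableSpace Ω] {P : Measure Ω}
    [IsProbabilityMeasure P] {s : Set Ω} {δ : ℝ} (hδ : 0 ≤ δ)
    (hs : P s ≤ ENNReal.ofReal δ) :
    ENNReal.ofReal (1 - δ) ≤ P sᶜ := by
  rw [ENNReal.ofReal_sub _ hδ, ENNReal.ofReal_one, ← measure_univ (μ := P), compl_eq_univ_sdiff]
  exact (tsub_le_tsub_left hs _).trans le_measure_sdiff

theorem var_estimate_dkw_general {Ω : Type*} [MeasurableSpace Ω] (P : Measure Ω)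
    [IsProbabilityMeasure P] (Z : Ω → ℝ) (hZ : Measurable Z)
    (F : ℝ → ℝ) (hFdef : ∀ α : ℝ, F α = (P {ω | Z ω ≤ α}).toReal)
    (N : ℕ) (hN : 0 < N)
    (Fhat : Ω → ℝ → ℝ)
    (β δ : ℝ) (hβ : β ∈ Set.Ioo (0 : ℝ) 1) (hδ : δ ∈ Set.Ioo (0 : ℝ) 1)
    (hDKW : ∀ c : ℝ, 0 < c →
      P {ω | ∃ α : ℝ, c < |Fhat ω α - F α|} ≤
        ENNReal.ofReal (2 * Real.exp (-2 * N * c ^ 2))) :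
    ENNReal.ofReal (1 - δ) ≤
      P {ω |
        sInf (Real.toEReal ''
            {α : ℝ | β ≤ Fhat ω α + Real.sqrt (Real.log (2 / δ) / (2 * N))}) ≤
          ((sInf {α : ℝ | β ≤ F α} : ℝ) : EReal) ∧
        ((sInf {α : ℝ | β ≤ F α} : ℝ) : EReal) ≤
          sInf (Real.toEReal ''
            {α : ℝ | β ≤ Fhat ω α - Real.sqrt (Real.log (2 / δ) / (2 * N))})} := by
  obtain ⟨hβ0, hβ1⟩ := hβ
  obtain ⟨hδ0, hδ1⟩ := hδ
  obtain rfl : F = cdf (P.map Z) :=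
    funext fun α => (hFdef α).trans (cdf_map_eq_toReal_measure_le P hZ α).symm
  have hNpos : (0 : ℝ) < N := Nat.cast_pos.mpr hN
  set ε := Real.sqrt (Real.log (2 / δ) / (2 * N))
  have hlog : 0 < Real.log (2 / δ) := Real.log_pos ((lt_div_iff₀ hδ0).mpr (by linarith))
  have hε : 0 < ε := Real.sqrt_pos.mpr (by positivity)
  have hbad := hDKW ε hε
  rw [two_mul_exp_neg_two_mul_sqrt_log_sq hNpos hδ0 (by linarith)] at hbad
  refine (ofReal_one_sub_le_measure_compl hδ0.le hbad).trans (measure_mono fun ω hω => ?_)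
  simp only [mem_compl_iff, mem_ofPred_eq, not_exists, not_lt] at hω
  exact coe_csInf_mem_Icc_sInf_image_toEReal
    (fun a (ha : β ≤ _ - ε) => show β ≤ _ by linarith [(abs_le.mp (hω a)).2])
    (fun a (ha : β ≤ _) => show β ≤ _ + ε by linarith [(abs_le.mp (hω a)).1])
    (nonempty_setOf_le_cdf _ hβ1) (bddBelow_setOf_le_cdf _ hβ0)

/-- Combining the DKW-type bound with the set-inclusion argument: if
`Z¹, …, Zᴺ` are i.i.d. copies of a random variable `Z` with continuous CDF
`F_Z`, `F̂(α) := (1/N) ∑ᵢ 𝟙(Zⁱ ≤ α)` is the empirical CDF, and `δ ∈ (0,1)`,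
then with probability at least `1 − δ`,
`inf {α | F̂(α) + ε ≥ β} ≤ VaR_β(Z) ≤ inf {α | F̂(α) − ε ≥ β}`, where
`ε := √(ln(2/δ)/(2N))`, `VaR_β(Z) = inf {α | F_Z(α) ≥ β}`, and the outer
infima are taken in the extended reals with `inf ∅ = +∞`. -/
theorem var_estimate_dkw {Ω : Type*} [MeasurableSpace Ω] (P : Measure Ω)
    [IsProbabilityMeasure P] (Z : Ω → ℝ) (hZ : Measurable Z)
    (F : ℝ → ℝ) (hFdef : ∀ α : ℝ, F α = (P {ω | Z ω ≤ α}).toReal)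
    (hFcont : Continuous F)
    (N : ℕ) (hN : 0 < N) (Zs : Fin N → Ω → ℝ) (hZs : ∀ i, Measurable (Zs i))
    (hindep : ProbabilityTheory.iIndepFun Zs P)
    (hident : ∀ i, Measure.map (Zs i) P = Measure.map Z P)
    (Fhat : Ω → ℝ → ℝ)
    (hFhat : ∀ ω α, Fhat ω α =
      (1 / (N : ℝ)) * ∑ i : Fin N, (if Zs i ω ≤ α then (1 : ℝ) else 0))
    (β δ : ℝ) (hβ : β ∈ Set.Ioo (0 : ℝ) 1) (hδ : δ ∈ Set.Ioo (0 : ℝ) 1)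
    (hDKW : ∀ c : ℝ, 0 < c →
      P {ω | ∃ α : ℝ, c < |Fhat ω α - F α|} ≤
        ENNReal.ofReal (2 * Real.exp (-2 * N * c ^ 2))) :
    ENNReal.ofReal (1 - δ) ≤
      P {ω |
        sInf (Real.toEReal ''
            {α : ℝ | β ≤ Fhat ω α + Real.sqrt (Real.log (2 / δ) / (2 * N))}) ≤
          ((sInf {α : ℝ | β ≤ F α} : ℝ) : EReal) ∧
        ((sInf {α : ℝ | β ≤ F α} : ℝ) : EReal) ≤
          sInf (Real.toEReal ''
            {α : ℝ | β ≤ Fhat ω α - Real.sqrt (Real.log (2 / δ) / (2 * N))})} :=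
  var_estimate_dkw_general P Z hZ F hFdef N hN Fhat β δ hβ hδ hDKW
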